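/- Suppose x, y, θ, λ, μ : ℝ × [0,ℓ] → ℝ are smooth and satisfy the nonholonomic planar Cosserat rod equations ρẍ + Kx⁗ = λ, ρÿ + Ky⁗ = μ, αθ̈ − βθ″ = R(λ y′ − μ x′) together with the rolling constraints ẋ + R θ̇ y′ = 0 and ẏ − R θ̇ x′ = 0 on ℝ × [0,ℓ], and suppose the free-end boundary conditions hold: for all t ∈ ℝ, x″ = y″ = θ′ = 0 and x‴ = y‴ = 0 at s = 0 and at s = ℓ. Then the total energy E(t) = ∫₀^ℓ [ (ρ/2)(ẋ² + ẏ²) + (α/2)θ̇² + (K/2)((x″)² + (y″)²) + (β/2)(θ′)² ] ds is constant in t. -/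

import Mathlib

/-!
Differentiating the energy density in time and substituting the equations of motion, its time
derivative becomes the arclength derivative of the flux
`β θ̇ θ′ + K (x″ ẋ′ − ẋ x‴) + K (y″ ẏ′ − ẏ y‴)` plus the power `λ (ẋ + R θ̇ y′) + μ (ẏ − R θ̇ x′)`
of the reaction forces, which vanishes by the rolling constraints. The flux vanishes at the free
ends, so the spatial integral of `∂ₜ E` is zero, and Fubini turns this into `E(t₂) − E(t₁) = 0`.
-/
open MeasureTheory

/-- Partial derivative with respect to the first (time) variable. -/
noncomputable def pt (f : ℝ → ℝ → ℝ) : ℝ → ℝ → ℝ := fun t s => deriv (fun τ => f τ s) t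

/-- Partial derivative with respect to the second (arclength) variable. -/
noncomputable def ps (f : ℝ → ℝ → ℝ) : ℝ → ℝ → ℝ := fun t s => deriv (fun σ => f t σ) s

/-- Smoothness of a field of two real variables. -/
def Smooth2 (f : ℝ → ℝ → ℝ) : Prop := ContDiff ℝ (⊤ : ℕ∞) (fun p : ℝ × ℝ => f p.1 p.2)

/-- Energy density of the planar Cosserat rod. -/
noncomputable def Edens (ρ α β K : ℝ) (x y θ : ℝ → ℝ → ℝ) : ℝ → ℝ → ℝ := fun t s =>
  ρ / 2 * ((pt x t s) ^ 2 + (pt y t s) ^ 2) + α / 2 * (pt θ t s) ^ 2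
    + K / 2 * ((ps (ps x) t s) ^ 2 + (ps (ps y) t s) ^ 2) + β / 2 * (ps θ t s) ^ 2

open Function Set

section PartialDerivatives

variable {f : ℝ → ℝ → ℝ}

theorem pt_eq_fderiv {t s : ℝ} (hf : DifferentiableAt ℝ (uncurry f) (t, s)) :
    pt f t s = fderiv ℝ (uncurry f) (t, s) (1, 0) :=
  (hf.hasFDerivAt.comp_hasDerivAt (f := fun τ => (τ, s)) t
    ((hasDerivAt_id t).prodMk (hasDerivAt_const t s))).deriv

theorem ps_eq_fderiv {t s : ℝ} (hf : DifferentiableAt ℝ (uncurry f) (t, s)) :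
    ps f t s = fderiv ℝ (uncurry f) (t, s) (0, 1) :=
  (hf.hasFDerivAt.comp_hasDerivAt (f := fun σ => (t, σ)) s
    ((hasDerivAt_const s t).prodMk (hasDerivAt_id s))).deriv

namespace Smooth2

theorem differentiable (hf : Smooth2 f) : Differentiable ℝ (uncurry f) :=
  ContDiff.differentiable hf (by simp)

theorem continuous (hf : Smooth2 f) : Continuous (uncurry f) :=
  ContDiff.continuous hf

theorem contDiff_fderiv (hf : Smooth2 f) : ContDiff ℝ (⊤ : ℕ∞) (fderiv ℝ (uncurry f)) :=
  ContDiff.fderiv_right hf le_rfl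

theorem hasDerivAt_pt (hf : Smooth2 f) (t s : ℝ) :
    HasDerivAt (fun τ => f τ s) (pt f t s) t :=
  (hf.differentiable.comp (differentiable_id.prodMk (differentiable_const s)) t).hasDerivAt

theorem hasDerivAt_ps (hf : Smooth2 f) (t s : ℝ) : HasDerivAt (f t) (ps f t s) s :=
  (hf.differentiable.comp ((differentiable_const t).prodMk differentiable_id) s).hasDerivAt

theorem uncurry_pt (hf : Smooth2 f) :
    uncurry (pt f) = fun p => fderiv ℝ (uncurry f) p (1, 0) :=
  funext fun p => pt_eq_fderiv (hf.differentiable p)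

theorem uncurry_ps (hf : Smooth2 f) :
    uncurry (ps f) = fun p => fderiv ℝ (uncurry f) p (0, 1) :=
  funext fun p => ps_eq_fderiv (hf.differentiable p)

theorem pt (hf : Smooth2 f) : Smooth2 (pt f) := by
  change ContDiff ℝ _ (uncurry (_root_.pt f))
  rw [hf.uncurry_pt]
  exact (ContinuousLinearMap.apply ℝ ℝ ((1 : ℝ), (0 : ℝ))).contDiff.comp hf.contDiff_fderiv

theorem ps (hf : Smooth2 f) : Smooth2 (ps f) := by
  change ContDiff ℝ _ (uncurry (_root_.ps f))
  rw [hf.uncurry_ps]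
  exact (ContinuousLinearMap.apply ℝ ℝ ((0 : ℝ), (1 : ℝ))).contDiff.comp hf.contDiff_fderiv

end Smooth2

theorem pt_ps_comm (hf : Smooth2 f) (t s : ℝ) : pt (ps f) t s = ps (pt f) t s := by
  have hf' : DifferentiableAt ℝ (fderiv ℝ (uncurry f)) (t, s) :=
    hf.contDiff_fderiv.differentiable (by simp) _
  calc pt (ps f) t s
      = fderiv ℝ (fun p => fderiv ℝ (uncurry f) p (0, 1)) (t, s) (1, 0) := by
        rw [pt_eq_fderiv (hf.ps.differentiable _), hf.uncurry_ps]
    _ = fderiv ℝ (fderiv ℝ (uncurry f)) (t, s) (1, 0) (0, 1) := by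
        rw [fderiv_clm_apply hf' (differentiableAt_const _)]; simp
    _ = fderiv ℝ (fderiv ℝ (uncurry f)) (t, s) (0, 1) (1, 0) :=
        (ContDiff.contDiffAt hf).isSymmSndFDerivAt (by simpa using ENat.LEInfty.out) _ _
    _ = fderiv ℝ (fun p => fderiv ℝ (uncurry f) p (1, 0)) (t, s) (0, 1) := by
        rw [fderiv_clm_apply hf' (differentiableAt_const _)]; simp
    _ = ps (pt f) t s := by
        rw [ps_eq_fderiv (hf.pt.differentiable _), hf.uncurry_pt]

end PartialDerivatives

open MeasureTheory intervalIntegral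

theorem intervalIntegral_integral_swap_of_continuous {E : Type*} [NormedAddCommGroup E]
    [NormedSpace ℝ E] [CompleteSpace E] {f : ℝ → ℝ → E} (hf : Continuous (uncurry f))
    {a b c d : ℝ} (hab : a ≤ b) (hcd : c ≤ d) :
    ∫ x in a..b, ∫ y in c..d, f x y = ∫ y in c..d, ∫ x in a..b, f x y := by
  simp only [integral_of_le hab, integral_of_le hcd]
  refine integral_integral_swap ?_
  rw [Measure.prod_restrict]
  exact (hf.continuousOn.integrableOn_compact (isCompact_Icc.prod isCompact_Icc)).mono_set
    (prod_mono Ioc_subset_Icc_self Ioc_subset_Icc_self)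

theorem intervalIntegral_eq_of_hasDerivAt_of_integral_eq_zero {e e' : ℝ → ℝ → ℝ} {a b : ℝ}
    (hab : a ≤ b) (he : Continuous (uncurry e)) (he' : Continuous (uncurry e'))
    (hderiv : ∀ t s, HasDerivAt (fun τ => e τ s) (e' t s) t)
    (hzero : ∀ t, ∫ s in a..b, e' t s = 0) (t₁ t₂ : ℝ) :
    ∫ s in a..b, e t₁ s = ∫ s in a..b, e t₂ s := by
  wlog h : t₁ ≤ t₂ generalizing t₁ t₂
  · exact (this t₂ t₁ (le_of_not_ge h)).symm
  have hint : ∀ t, IntervalIntegrable (e t) volume a b := fun t =>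
    (he.comp (Continuous.prodMk_right t)).intervalIntegrable a b
  have hftc : ∀ s, e t₂ s - e t₁ s = ∫ t in t₁..t₂, e' t s := fun s =>
    (integral_eq_sub_of_hasDerivAt (fun t _ => hderiv t s)
      ((he'.comp (continuous_id.prodMk continuous_const)).intervalIntegrable _ _)).symm
  rw [eq_comm, ← sub_eq_zero, ← integral_sub (hint t₂) (hint t₁)]
  calc ∫ s in a..b, (e t₂ s - e t₁ s)
      = ∫ s in a..b, ∫ t in t₁..t₂, e' t s := by simp only [hftc]
    _ = ∫ t in t₁..t₂, ∫ s in a..b, e' t s :=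
        intervalIntegral_integral_swap_of_continuous (f := fun s t => e' t s)
          (he'.comp continuous_swap) hab h
    _ = 0 := by simp only [hzero, intervalIntegral.integral_zero]

section CosseratRod

variable (ρ α β K : ℝ) (x y θ : ℝ → ℝ → ℝ)

noncomputable def energyPower : ℝ → ℝ → ℝ := fun t s =>
  ρ * (pt x t s * pt (pt x) t s + pt y t s * pt (pt y) t s) + α * (pt θ t s * pt (pt θ) t s)
    + K * (ps (ps x) t s * pt (ps (ps x)) t s + ps (ps y) t s * pt (ps (ps y)) t s)
    + β * (ps θ t s * pt (ps θ) t s)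

noncomputable def energyFlux : ℝ → ℝ → ℝ := fun t s =>
  β * (pt θ t s * ps θ t s)
    + K * (ps (ps x) t s * pt (ps x) t s - pt x t s * ps (ps (ps x)) t s)
    + K * (ps (ps y) t s * pt (ps y) t s - pt y t s * ps (ps (ps y)) t s)

variable {x y θ}

theorem continuous_Edens (hx : Smooth2 x) (hy : Smooth2 y) (hθ : Smooth2 θ) :
    Continuous (uncurry (Edens ρ α β K x y θ)) := by
  have := hx.pt.continuous
  have := hy.pt.continuous
  have := hθ.pt.continuous
  have := hx.ps.ps.continuous
  have := hy.ps.ps.continuous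
  have := hθ.ps.continuous
  unfold Edens uncurry at *
  fun_prop

theorem continuous_energyPower (hx : Smooth2 x) (hy : Smooth2 y) (hθ : Smooth2 θ) :
    Continuous (uncurry (energyPower ρ α β K x y θ)) := by
  have := hx.pt.continuous
  have := hy.pt.continuous
  have := hθ.pt.continuous
  have := hx.ps.ps.continuous
  have := hy.ps.ps.continuous
  have := hθ.ps.continuous
  have := hx.pt.pt.continuous
  have := hy.pt.pt.continuous
  have := hθ.pt.pt.continuous
  have := hx.ps.ps.pt.continuous
  have := hy.ps.ps.pt.continuous
  have := hθ.ps.pt.continuous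
  unfold energyPower uncurry at *
  fun_prop

theorem hasDerivAt_Edens (hx : Smooth2 x) (hy : Smooth2 y) (hθ : Smooth2 θ) (t s : ℝ) :
    HasDerivAt (fun τ => Edens ρ α β K x y θ τ s) (energyPower ρ α β K x y θ t s) t := by
  have hkin := ((hx.pt.hasDerivAt_pt t s).fun_pow 2).add ((hy.pt.hasDerivAt_pt t s).fun_pow 2)
  have hrot := (hθ.pt.hasDerivAt_pt t s).fun_pow 2
  have hbend :=
    ((hx.ps.ps.hasDerivAt_pt t s).fun_pow 2).add ((hy.ps.ps.hasDerivAt_pt t s).fun_pow 2)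
  have htwist := (hθ.ps.hasDerivAt_pt t s).fun_pow 2
  refine ((((hkin.const_mul (ρ / 2)).add (hrot.const_mul (α / 2))).add
    (hbend.const_mul (K / 2))).add (htwist.const_mul (β / 2))).congr_deriv ?_
  simp only [energyPower]
  ring

theorem hasDerivAt_energyFlux (hx : Smooth2 x) (hy : Smooth2 y) (hθ : Smooth2 θ) (t s : ℝ) :
    HasDerivAt (energyFlux β K x y θ t)
      (energyPower ρ α β K x y θ t s
        - (pt x t s * (ρ * pt (pt x) t s + K * ps (ps (ps (ps x))) t s)
          + pt y t s * (ρ * pt (pt y) t s + K * ps (ps (ps (ps y))) t s)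
          + pt θ t s * (α * pt (pt θ) t s - β * ps (ps θ) t s))) s := by
  have hflux_x := ((hx.ps.ps.hasDerivAt_ps t s).mul (hx.ps.pt.hasDerivAt_ps t s)).sub
    ((hx.pt.hasDerivAt_ps t s).mul (hx.ps.ps.ps.hasDerivAt_ps t s))
  have hflux_y := ((hy.ps.ps.hasDerivAt_ps t s).mul (hy.ps.pt.hasDerivAt_ps t s)).sub
    ((hy.pt.hasDerivAt_ps t s).mul (hy.ps.ps.ps.hasDerivAt_ps t s))
  have hflux_θ := (hθ.pt.hasDerivAt_ps t s).mul (hθ.ps.hasDerivAt_ps t s)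
  refine ((hflux_θ.const_mul β).add (hflux_x.const_mul K) |>.add
    (hflux_y.const_mul K)).congr_deriv ?_
  simp only [energyPower]
  rw [pt_ps_comm hθ, pt_ps_comm hx, pt_ps_comm hy, pt_ps_comm hx.ps, pt_ps_comm hy.ps]
  ring

theorem energyFlux_eq_zero {t s : ℝ} (hx₂ : ps (ps x) t s = 0) (hy₂ : ps (ps y) t s = 0)
    (hθ₁ : ps θ t s = 0) (hx₃ : ps (ps (ps x)) t s = 0) (hy₃ : ps (ps (ps y)) t s = 0) :
    energyFlux β K x y θ t s = 0 := by
  simp only [energyFlux, hx₂, hy₂, hθ₁, hx₃, hy₃]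
  ring

end CosseratRod

theorem total_energy_conservation_nonholonomic_rod
    (ρ α β K R ℓ : ℝ)
    (hℓ : 0 < ℓ) (x y θ lam mu : ℝ → ℝ → ℝ)
    (hx : Smooth2 x) (hy : Smooth2 y) (hθ : Smooth2 θ)
    (heqx : ∀ t : ℝ, ∀ s ∈ Set.Icc (0 : ℝ) ℓ,
      ρ * pt (pt x) t s + K * ps (ps (ps (ps x))) t s = lam t s)
    (heqy : ∀ t : ℝ, ∀ s ∈ Set.Icc (0 : ℝ) ℓ,
      ρ * pt (pt y) t s + K * ps (ps (ps (ps y))) t s = mu t s)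
    (heqθ : ∀ t : ℝ, ∀ s ∈ Set.Icc (0 : ℝ) ℓ,
      α * pt (pt θ) t s - β * ps (ps θ) t s
        = R * (lam t s * ps y t s - mu t s * ps x t s))
    (hc1 : ∀ t : ℝ, ∀ s ∈ Set.Icc (0 : ℝ) ℓ, pt x t s + R * pt θ t s * ps y t s = 0)
    (hc2 : ∀ t : ℝ, ∀ s ∈ Set.Icc (0 : ℝ) ℓ, pt y t s - R * pt θ t s * ps x t s = 0)
    (hbc : ∀ t : ℝ, ∀ s : ℝ, s = 0 ∨ s = ℓ →
      ps (ps x) t s = 0 ∧ ps (ps y) t s = 0 ∧ ps θ t s = 0 ∧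
        ps (ps (ps x)) t s = 0 ∧ ps (ps (ps y)) t s = 0) :
    ∀ t₁ t₂ : ℝ,
      (∫ s in (0 : ℝ)..ℓ, Edens ρ α β K x y θ t₁ s)
        = ∫ s in (0 : ℝ)..ℓ, Edens ρ α β K x y θ t₂ s := by
  have hpower := continuous_energyPower ρ α β K hx hy hθ
  refine intervalIntegral_eq_of_hasDerivAt_of_integral_eq_zero hℓ.le
    (continuous_Edens ρ α β K hx hy hθ) hpower (hasDerivAt_Edens ρ α β K hx hy hθ) fun t => ?_
  have hflux : ∀ s ∈ uIcc 0 ℓ,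
      HasDerivAt (energyFlux β K x y θ t) (energyPower ρ α β K x y θ t s) s := by
    intro s hs
    rw [uIcc_of_le hℓ.le] at hs
    refine (hasDerivAt_energyFlux ρ α β K hx hy hθ t s).congr_deriv ?_
    rw [heqx t s hs, heqy t s hs, heqθ t s hs]
    linear_combination -(lam t s * hc1 t s hs + mu t s * hc2 t s hs)
  obtain ⟨hx₂, hy₂, hθ₁, hx₃, hy₃⟩ := hbc t 0 (.inl rfl)
  obtain ⟨hx₂', hy₂', hθ₁', hx₃', hy₃'⟩ := hbc t ℓ (.inr rfl)
  rw [integral_eq_sub_of_hasDerivAt hflux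
      ((hpower.comp (Continuous.prodMk_right t)).intervalIntegrable _ _),
    energyFlux_eq_zero β K hx₂ hy₂ hθ₁ hx₃ hy₃, energyFlux_eq_zero β K hx₂' hy₂' hθ₁' hx₃' hy₃',
    sub_zero]
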